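/- For every real x > 0, 1 - Φ(x) < 2φ(x)/(√(8/π + x²) + x) (Pollak's upper bound). -/

import Mathlib

open MeasureTheory Real

/-- Standard Gaussian density. -/
noncomputable def gaussPdf (x : ℝ) : ℝ := Real.exp (-x ^ 2 / 2) / Real.sqrt (2 * Real.pi)

/-- Standard Gaussian distribution function. -/
noncomputable def gaussCdf (x : ℝ) : ℝ := ∫ t in Set.Iic x, gaussPdf t

/-- Finite continued fraction `hcf k g x = x + 1/(x + 2/(⋯ + k/(g x)))`,
with `hcf 0 g = g`. -/
noncomputable def hcf : ℕ → (ℝ → ℝ) → ℝ → ℝ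
  | 0, g => g
  | (k + 1), g => hcf k (fun x => x + ((k : ℝ) + 1) / g x)

/-!
With `s = √(8/π + x²)`, the gap `G(x) = 1 - Φ(x) - 2φ(x)/(s + x)` has derivative
`G'(x) = φ(x) (x s - x² + 2 - 8/π) / (s (s + x))`. Comparing the squares of `x s` and
`x² + 8/π - 2`, the numerator has the sign of `(4 - 8/π) x² - (8/π - 2)²`, so it changes sign
exactly once on `(0, ∞)`, from negative to positive. Hence `G` strictly decreases from
`G(0) = 0` (the value `8/π` is exactly the one making `G(0)` vanish) and then strictly increases
towards its limit `0` at `+∞`, so it is negative on `(0, ∞)`.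
-/

open Set Filter Topology

theorem neg_of_strictAntiOn_of_strictMonoOn_of_tendsto_zero {f : ℝ → ℝ} {a b x : ℝ}
    (hfa : f a = 0) (hanti : StrictAntiOn f (Icc a b)) (hmono : StrictMonoOn f (Ici b))
    (hlim : Tendsto f atTop (𝓝 0)) (hx : a < x) : f x < 0 := by
  rcases le_or_gt x b with hxb | hbx
  · exact hfa ▸ hanti ⟨le_rfl, hx.le.trans hxb⟩ ⟨hx.le, hxb⟩ hx
  · have hle : f (x + 1) ≤ 0 := ge_of_tendsto hlim <| by
      filter_upwards [eventually_ge_atTop (x + 1)] with y hy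
      exact hmono.monotoneOn (mem_Ici.2 (by linarith)) (mem_Ici.2 (by linarith)) hy
    exact (hmono hbx.le (mem_Ici.2 (by linarith)) (lt_add_one x)).trans_le hle

theorem gaussPdf_eq_gaussianPDFReal : gaussPdf = ProbabilityTheory.gaussianPDFReal 0 1 := by
  ext x
  simp [gaussPdf, ProbabilityTheory.gaussianPDFReal, div_eq_inv_mul]

theorem gaussPdf_pos (x : ℝ) : 0 < gaussPdf x := by
  unfold gaussPdf; positivity

theorem continuous_gaussPdf : Continuous gaussPdf := by
  unfold gaussPdf; fun_prop

theorem integrable_gaussPdf : Integrable gaussPdf :=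
  gaussPdf_eq_gaussianPDFReal ▸ ProbabilityTheory.integrable_gaussianPDFReal 0 1

theorem integral_gaussPdf : ∫ x, gaussPdf x = 1 :=
  gaussPdf_eq_gaussianPDFReal ▸ ProbabilityTheory.integral_gaussianPDFReal_eq_one 0 one_ne_zero

theorem gaussPdf_abs (x : ℝ) : gaussPdf |x| = gaussPdf x := by
  simp [gaussPdf]

theorem hasDerivAt_gaussPdf (x : ℝ) : HasDerivAt gaussPdf (-x * gaussPdf x) x := by
  have h : HasDerivAt (fun y : ℝ => -y ^ 2 / 2) (-x) x := by
    simpa using ((hasDerivAt_pow 2 x).neg.div_const 2).congr_deriv (by simp; ring)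
  exact (h.exp.div_const (√(2 * π))).congr_deriv (by simp only [gaussPdf]; ring)

theorem tendsto_gaussPdf_atTop : Tendsto gaussPdf atTop (𝓝 0) := by
  have h : Tendsto (fun x : ℝ => -x ^ 2 / 2) atTop atBot :=
    (tendsto_neg_atTop_atBot.comp (tendsto_pow_atTop two_ne_zero)).atBot_div_const two_pos
  unfold gaussPdf
  simpa using (tendsto_exp_atBot.comp h).div_const (√(2 * π))

theorem one_sub_gaussCdf (x : ℝ) : 1 - gaussCdf x = ∫ t in Ioi x, gaussPdf t := by
  rw [← integral_gaussPdf, gaussCdf, ← intervalIntegral.integral_Iic_add_Ioi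
    integrable_gaussPdf.integrableOn integrable_gaussPdf.integrableOn, add_sub_cancel_left]

theorem one_sub_gaussCdf_zero : 1 - gaussCdf 0 = 1 / 2 := by
  have h := integral_comp_abs (f := gaussPdf)
  simp only [gaussPdf_abs, integral_gaussPdf] at h
  rw [one_sub_gaussCdf]; linarith

theorem hasDerivAt_gaussCdf (x : ℝ) : HasDerivAt gaussCdf (gaussPdf x) x := by
  have hcdf : ∀ y, gaussCdf y = gaussCdf 0 + ∫ t in (0 : ℝ)..y, gaussPdf t := fun y => by
    rw [gaussCdf, gaussCdf, ← intervalIntegral.integral_Iic_sub_Iic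
      integrable_gaussPdf.integrableOn integrable_gaussPdf.integrableOn, add_sub_cancel]
  refine HasDerivAt.congr_of_eventuallyEq ?_ (Eventually.of_forall hcdf)
  exact (intervalIntegral.integral_hasDerivAt_right integrable_gaussPdf.intervalIntegrable
    (continuous_gaussPdf.stronglyMeasurableAtFilter _ _)
    continuous_gaussPdf.continuousAt).const_add _

theorem tendsto_one_sub_gaussCdf_atTop : Tendsto (fun x => 1 - gaussCdf x) atTop (𝓝 0) := by
  simp only [one_sub_gaussCdf]
  have h := tendsto_setIntegral_of_antitone (μ := volume) (f := gaussPdf) (s := Ioi)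
    (fun _ => measurableSet_Ioi) (fun _ _ h => Ioi_subset_Ioi h)
    ⟨0, integrable_gaussPdf.integrableOn⟩
  have hempty : ⋂ n : ℝ, Ioi n = ∅ := iInter_eq_empty_iff.2 fun x => ⟨x, lt_irrefl x⟩
  rwa [hempty, Measure.restrict_empty, integral_zero_measure] at h

noncomputable def pollakGap (c x : ℝ) : ℝ :=
  1 - gaussCdf x - 2 * gaussPdf x / (√(c + x ^ 2) + x)

section PollakGap

variable {c : ℝ}

theorem sqrt_add_sq_add_pos (hc : 0 < c) (x : ℝ) : 0 < √(c + x ^ 2) + x := by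
  have hs := Real.sq_sqrt (by positivity : 0 ≤ c + x ^ 2)
  nlinarith [Real.sqrt_nonneg (c + x ^ 2)]

theorem hasDerivAt_pollakGap (hc : 0 < c) (x : ℝ) :
    HasDerivAt (pollakGap c) (gaussPdf x * (x * √(c + x ^ 2) - x ^ 2 + 2 - c) /
      (√(c + x ^ 2) * (√(c + x ^ 2) + x))) x := by
  have hpos := sqrt_add_sq_add_pos hc x
  have hs0 : √(c + x ^ 2) ≠ 0 := (Real.sqrt_pos.2 (by positivity)).ne'
  have hs2 := Real.sq_sqrt (by positivity : 0 ≤ c + x ^ 2)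
  have hs : HasDerivAt (fun y => √(c + y ^ 2)) (x / √(c + x ^ 2)) x := by
    have := ((hasDerivAt_pow 2 x).const_add c).sqrt (by positivity)
    exact this.congr_deriv (by field_simp; push_cast; ring)
  have h := ((hasDerivAt_const x 1).sub (hasDerivAt_gaussCdf x)).sub
    (((hasDerivAt_gaussPdf x).const_mul 2).div (hs.add (hasDerivAt_id x)) hpos.ne')
  refine h.congr_deriv ?_
  simp only [Pi.add_apply, id]
  field_simp
  linear_combination -(gaussPdf x * (√(c + x ^ 2) + x)) * hs2

theorem continuous_pollakGap (hc : 0 < c) : Continuous (pollakGap c) :=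
  continuous_iff_continuousAt.2 fun x => (hasDerivAt_pollakGap hc x).continuousAt

theorem tendsto_pollakGap_atTop (c : ℝ) : Tendsto (pollakGap c) atTop (𝓝 0) := by
  have h := (tendsto_gaussPdf_atTop.const_mul 2).div_atTop
    ((tendsto_id (α := ℝ)).nonneg_add_atTop fun x => Real.sqrt_nonneg (c + x ^ 2))
  rw [← sub_zero 0]
  exact tendsto_one_sub_gaussCdf_atTop.sub h

theorem mul_sqrt_add_sq_lt (hc : 2 ≤ c) (hc4 : c < 4) {x : ℝ} (hx0 : 0 ≤ x)
    (hx : x < (c - 2) / √(4 - c)) : x * √(c + x ^ 2) < x ^ 2 + c - 2 := by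
  have hxt : x * √(4 - c) < c - 2 := (lt_div_iff₀ (Real.sqrt_pos.2 (by linarith))).1 hx
  have hsq := pow_lt_pow_left₀ hxt (by positivity) two_ne_zero
  rw [mul_pow, Real.sq_sqrt (by linarith)] at hsq
  refine lt_of_pow_lt_pow_left₀ 2 (by linarith [sq_nonneg x]) ?_
  rw [mul_pow, Real.sq_sqrt (by positivity)]
  linear_combination hsq

theorem lt_mul_sqrt_add_sq (hc : 2 ≤ c) (hc4 : c < 4) {x : ℝ}
    (hx : (c - 2) / √(4 - c) < x) : x ^ 2 + c - 2 < x * √(c + x ^ 2) := by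
  have hxt : c - 2 < x * √(4 - c) := (div_lt_iff₀ (Real.sqrt_pos.2 (by linarith))).1 hx
  have hx0 : 0 ≤ x := (div_nonneg (by linarith) (Real.sqrt_nonneg _)).trans hx.le
  have hsq := pow_lt_pow_left₀ hxt (by linarith) two_ne_zero
  rw [mul_pow, Real.sq_sqrt (by linarith)] at hsq
  refine lt_of_pow_lt_pow_left₀ 2 (by positivity) ?_
  rw [mul_pow, Real.sq_sqrt (by positivity)]
  linear_combination hsq

theorem strictAntiOn_pollakGap (hc : 2 ≤ c) (hc4 : c < 4) :
    StrictAntiOn (pollakGap c) (Icc 0 ((c - 2) / √(4 - c))) := by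
  have hc0 : 0 < c := by linarith
  refine strictAntiOn_of_hasDerivWithinAt_neg (convex_Icc _ _)
    (continuous_pollakGap hc0).continuousOn
    (fun x _ => (hasDerivAt_pollakGap hc0 x).hasDerivWithinAt) fun x hx => ?_
  rw [interior_Icc] at hx
  have hnum := mul_sqrt_add_sq_lt hc hc4 hx.1.le hx.2
  exact div_neg_of_neg_of_pos (mul_neg_of_pos_of_neg (gaussPdf_pos x) (by linarith))
    (mul_pos (Real.sqrt_pos.2 (by positivity)) (sqrt_add_sq_add_pos hc0 x))

theorem strictMonoOn_pollakGap (hc : 2 ≤ c) (hc4 : c < 4) :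
    StrictMonoOn (pollakGap c) (Ici ((c - 2) / √(4 - c))) := by
  have hc0 : 0 < c := by linarith
  refine strictMonoOn_of_hasDerivWithinAt_pos (convex_Ici _)
    (continuous_pollakGap hc0).continuousOn
    (fun x _ => (hasDerivAt_pollakGap hc0 x).hasDerivWithinAt) fun x hx => ?_
  rw [interior_Ici] at hx
  have hnum := lt_mul_sqrt_add_sq hc hc4 hx
  exact div_pos (mul_pos (gaussPdf_pos x) (by linarith))
    (mul_pos (Real.sqrt_pos.2 (by positivity)) (sqrt_add_sq_add_pos hc0 x))

end PollakGap

theorem pollakGap_zero : pollakGap (8 / π) 0 = 0 := by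
  have h : √(2 * π) * √(8 / π) = 4 := by
    rw [← Real.sqrt_mul (by positivity), show 2 * π * (8 / π) = 4 ^ 2 by field_simp; ring,
      Real.sqrt_sq (by norm_num)]
  have h0 : gaussPdf 0 = 1 / √(2 * π) := by simp [gaussPdf]
  rw [pollakGap, one_sub_gaussCdf_zero, h0, zero_pow two_ne_zero, add_zero, add_zero,
    mul_one_div, div_div, h]
  norm_num

theorem pollakGap_neg {x : ℝ} (hx : 0 < x) : pollakGap (8 / π) x < 0 := by
  have hc : 2 ≤ 8 / π := by rw [le_div_iff₀ pi_pos]; linarith [pi_le_four]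
  have hc4 : 8 / π < 4 := by rw [div_lt_iff₀ pi_pos]; linarith [pi_gt_three]
  exact neg_of_strictAntiOn_of_strictMonoOn_of_tendsto_zero pollakGap_zero
    (strictAntiOn_pollakGap hc hc4) (strictMonoOn_pollakGap hc hc4) (tendsto_pollakGap_atTop _) hx

/-- Pollak's upper bound. -/
theorem pollak_upper_bound (x : ℝ) (hx : 0 < x) :
    1 - gaussCdf x < 2 * gaussPdf x / (Real.sqrt (8 / Real.pi + x ^ 2) + x) := by
  have h := pollakGap_neg hx
  rw [pollakGap] at h
  linarith
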